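/- The subalgebra S_2 of W_2, consisting of those commutative bilinear operators A on E_2 such that the operator T_a(x)=A(a,x) has trace zero for every a ∈ E_2, equals the span of ξ_1−ξ_5, ξ_2−ξ_6, ξ_3, ξ_4; in particular S_2 is 4-dimensional. -/

import Mathlib

section

variable (K : Type*) [Field K] [CharZero K]

/-- The 2-dimensional space `E₂`. -/
abbrev V2 := Fin 2 → K

/-- The basis `e 0, e 1` of `E₂`. -/
noncomputable def e (i : Fin 2) : V2 K := Pi.single i 1

/-- `W(2)`: the space of all bilinear maps on `E₂`. -/
abbrev W := V2 K →ₗ[K] V2 K →ₗ[K] V2 K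

/-- The basis elements `α_{ij}^k` of `W(2)`, `alpha i j k (e t) (e l) = δ_{it} δ_{jl} • e k`
(indices shifted to `0,1`). -/
noncomputable def alpha (i j k : Fin 2) : W K :=
  LinearMap.mk₂ K (fun x y => (x i * y j) • e K k)
    (fun x x' y => by simp [add_mul, add_smul])
    (fun c x y => by simp [smul_smul, mul_assoc])
    (fun x y y' => by simp [mul_add, add_smul])
    (fun c x y => by simp [smul_smul]; ring_nf)

/-- The multiplication of the conservative algebra `W(2)`:
`(A·B)(x,y) = A(e₁, B(x,y)) − B(A(e₁,x), y) − B(x, A(e₁,y))`. -/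
noncomputable def mulW (A B : W K) : W K :=
  LinearMap.mk₂ K
    (fun x y => A (e K 0) (B x y) - B (A (e K 0) x) y - B x (A (e K 0) y))
    (fun x x' y => by simp only [map_add, LinearMap.add_apply]; abel)
    (fun c x y => by simp only [map_smul, LinearMap.smul_apply, smul_sub])
    (fun x y y' => by simp only [map_add, LinearMap.add_apply]; abel)
    (fun c x y => by simp only [map_smul, LinearMap.smul_apply, smul_sub])

end

set_option maxSynthPendingDepth 3
set_option synthInstance.maxHeartbeats 1000000
set_option maxHeartbeats 1000000

/-!
A commutative `A` is determined by the six coordinates `A(eᵢ, eⱼ)ₖ` with `i ≤ j`. The conditions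
`tr T_{e₀} = tr T_{e₁} = 0` read `A(e₀,e₁)₁ = -A(e₀,e₀)₀` and `A(e₁,e₁)₁ = -A(e₀,e₁)₀`, so `A` is
determined by the four remaining coordinates `A(e₀,e₀)₀, A(e₀,e₁)₀, A(e₁,e₁)₀, A(e₀,e₀)₁`, and
the four generators are exactly the elements of `S₂` whose coordinate vectors form the standard
basis of `K⁴`.
-/

section

variable {R : Type*} [CommRing R]

lemma LinearMap.trace_pi_eq_sum {ι : Type*} [Fintype ι] [DecidableEq ι]
    (f : (ι → R) →ₗ[R] ι → R) :
    LinearMap.trace R (ι → R) f = ∑ i, f (Pi.single i 1) i := by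
  rw [LinearMap.trace_eq_matrix_trace R (Pi.basisFun R ι), LinearMap.toMatrix_eq_toMatrix']
  simp [Matrix.trace, LinearMap.toMatrix'_apply]

variable (R) in
/-- The paper's `S_n`, for `M = Eₙ`. -/
def tracelessCommBilin (M : Type*) [AddCommGroup M] [Module R M] :
    Submodule R (M →ₗ[R] M →ₗ[R] M) where
  carrier := {A | (∀ x y, A x y = A y x) ∧ ∀ a, LinearMap.trace R M (A a) = 0}
  add_mem' := fun ⟨hA, hA'⟩ ⟨hB, hB'⟩ =>
    ⟨fun x y => by simp [hA x y, hB x y], fun a => by simp [hA' a, hB' a]⟩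
  zero_mem' := ⟨fun _ _ => rfl, fun _ => by simp⟩
  smul_mem' := fun c A ⟨hA, hA'⟩ => ⟨fun x y => by simp [hA x y], fun a => by simp [hA' a]⟩

end

section

variable (K : Type*) [Field K]

lemma alpha_apply (i j k : Fin 2) (x y : V2 K) : alpha K i j k x y = (x i * y j) • e K k := rfl

lemma e_apply (i j : Fin 2) : e K i j = if i = j then 1 else 0 := by
  simp [e, Pi.single_apply, eq_comm]

variable {K} in
lemma W.ext {A B : W K} (h : ∀ i j, A (e K i) (e K j) = B (e K i) (e K j)) : A = B :=
  LinearMap.ext_basis (Pi.basisFun K (Fin 2)) (Pi.basisFun K (Fin 2)) (by simpa [e] using h)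

lemma trace_V2_eq (f : V2 K →ₗ[K] V2 K) :
    LinearMap.trace K (V2 K) f = f (e K 0) 0 + f (e K 1) 1 := by
  rw [LinearMap.trace_pi_eq_sum, Fin.sum_univ_two]; rfl

/-- `ξ₁ - ξ₅, ξ₂ - ξ₆, ξ₃, ξ₄` in the paper's notation. -/
noncomputable def s2Gen : Fin 4 → W K :=
  ![alpha K 0 0 0 - (alpha K 0 1 1 + alpha K 1 0 1),
    (alpha K 0 1 0 + alpha K 1 0 0) - alpha K 1 1 1, alpha K 1 1 0, alpha K 0 0 1]

noncomputable def s2Coords (A : W K) : Fin 4 → K :=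
  ![A (e K 0) (e K 0) 0, A (e K 0) (e K 1) 0, A (e K 1) (e K 1) 0, A (e K 0) (e K 0) 1]

lemma range_s2Gen : Set.range (s2Gen K) = {alpha K 0 0 0 - (alpha K 0 1 1 + alpha K 1 0 1),
    (alpha K 0 1 0 + alpha K 1 0 0) - alpha K 1 1 1, alpha K 1 1 0, alpha K 0 0 1} := by
  rw [s2Gen, Matrix.range_cons, Matrix.range_cons, Matrix.range_cons, Matrix.range_cons_empty]
  simp only [Set.singleton_union]

lemma s2Coords_sum_smul_s2Gen (g : Fin 4 → K) : s2Coords K (∑ i, g i • s2Gen K i) = g := by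
  ext i
  fin_cases i <;> simp [s2Coords, s2Gen, Fin.sum_univ_four, alpha_apply, e_apply]

lemma s2Gen_mem (i : Fin 4) : s2Gen K i ∈ tracelessCommBilin K (V2 K) := by
  refine ⟨fun x y => ?_, fun a => ?_⟩
  · fin_cases i <;> simp [s2Gen, alpha_apply] <;> module
  · fin_cases i <;> simp [trace_V2_eq, s2Gen, alpha_apply, e_apply]

variable {K} in
lemma eq_sum_s2Coords_smul_s2Gen {A : W K} (hA : A ∈ tracelessCommBilin K (V2 K)) :
    A = ∑ i, s2Coords K A i • s2Gen K i := by
  obtain ⟨hcomm, htrace⟩ := hA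
  have h10 : A (e K 1) (e K 0) = A (e K 0) (e K 1) := hcomm _ _
  have h011 : A (e K 0) (e K 1) 1 = -A (e K 0) (e K 0) 0 :=
    eq_neg_of_add_eq_zero_right (by simpa [trace_V2_eq] using htrace (e K 0))
  have h111 : A (e K 1) (e K 1) 1 = -A (e K 0) (e K 1) 0 :=
    eq_neg_of_add_eq_zero_right (by simpa [trace_V2_eq, h10] using htrace (e K 1))
  refine W.ext fun i j => ?_
  ext t
  fin_cases i <;> fin_cases j <;> fin_cases t <;>
    simp [s2Coords, s2Gen, Fin.sum_univ_four, alpha_apply, e_apply, h10, h011, h111]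

lemma span_range_s2Gen :
    Submodule.span K (Set.range (s2Gen K)) = tracelessCommBilin K (V2 K) := by
  refine le_antisymm (Submodule.span_le.mpr (Set.range_subset_iff.mpr (s2Gen_mem K))) ?_
  intro A hA
  rw [eq_sum_s2Coords_smul_s2Gen hA]
  exact Submodule.sum_mem _ fun i _ => Submodule.smul_mem _ _ (Submodule.subset_span ⟨i, rfl⟩)

lemma linearIndependent_s2Gen : LinearIndependent K (s2Gen K) :=
  Fintype.linearIndependent_iff.mpr fun g hg => by
    rw [← s2Coords_sum_smul_s2Gen K g, hg]
    simp [s2Coords, Fin.forall_fin_succ]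

end

section

variable (K : Type*) [Field K] [CharZero K]

/-- The subalgebra `S₂` of `W₂`, consisting of the commutative bilinear operators
`A` on `E₂` such that `T_a : x ↦ A(a,x)` has trace zero for every `a`, equals the
span of `ξ₁−ξ₅, ξ₂−ξ₆, ξ₃, ξ₄`; in particular it is 4-dimensional. -/
theorem S2_description :
    {A : W K | (∀ x y : V2 K, A x y = A y x) ∧
        ∀ a : V2 K, LinearMap.trace K (V2 K) (A a) = 0}
      = ↑(Submodule.span K {alpha K 0 0 0 - (alpha K 0 1 1 + alpha K 1 0 1),
          (alpha K 0 1 0 + alpha K 1 0 0) - alpha K 1 1 1,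
          alpha K 1 1 0, alpha K 0 0 1}) ∧
    Module.finrank K (Submodule.span K {alpha K 0 0 0 - (alpha K 0 1 1 + alpha K 1 0 1),
          (alpha K 0 1 0 + alpha K 1 0 0) - alpha K 1 1 1,
          alpha K 1 1 0, alpha K 0 0 1} : Submodule K (W K)) = 4 := by
  rw [← range_s2Gen, finrank_span_eq_card (linearIndependent_s2Gen K), span_range_s2Gen]
  exact ⟨rfl, Fintype.card_fin 4⟩

end
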